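/- arXiv:2311.18669 — 3 statements merged into one kernel-verified Lean document; each statement's English description precedes it below -/
import Mathlib

section
/- Let w : [0,1] → ℝ be continuous and let φ_H be as above. Define κ_∞^{(w)}(H) = ∫_0^1 ∫_0^1 w(x) w(y) φ_H(x-y) dx dy and, for an integer p ≥ 1, κ_p^{(w)}(H) = p^{-2} ∑_{ℓ₁=0}^{p-1} ∑_{ℓ₂=0}^{p-1} w(ℓ₁/p) w(ℓ₂/p) φ_H((ℓ₁-ℓ₂)/p). If w is Lipschitz continuous, then there exists c > 0, depending only on w and a compact interval [H_-, H_+] ⊂ (0,1), such that |κ_p^{(w)}(H) - κ_∞^{(w)}(H)| ≤ c · p^{-min(2H,1)} for all p ≥ 1 and all H ∈ [H_-, H_+]. -/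
/-- The autocovariance kernel of second-order increments of fBM. -/
noncomputable def phiH (H x : ℝ) : ℝ :=
  (1 / 2) * ∑ k ∈ Finset.range 5,
    (-1 : ℝ) ^ (k + 1) * (Nat.choose 4 k : ℝ) * |x + (k : ℝ) - 2| ^ (2 * H)

/-- Riemann-sum version of the energy constant. -/
noncomputable def kappaP (w : ℝ → ℝ) (p : ℕ) (H : ℝ) : ℝ :=
  ((p : ℝ) ^ 2)⁻¹ * ∑ l1 ∈ Finset.range p, ∑ l2 ∈ Finset.range p,
    w ((l1 : ℝ) / p) * w ((l2 : ℝ) / p) * phiH H (((l1 : ℝ) - (l2 : ℝ)) / p)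

/-- Limiting energy constant. -/
noncomputable def kappaInf (w : ℝ → ℝ) (H : ℝ) : ℝ :=
  ∫ x in (0 : ℝ)..1, ∫ y in (0 : ℝ)..1, w x * w y * phiH H (x - y)

/-!
Write `F x y = w x * w y * φ_H (x - y)` and `α = min (2H) 1`. Each `|·| ^ (2H)` is `α`-Hölder on
`[-3, 3]` (subadditivity of `t ↦ t ^ (2H)` when `2H ≤ 1`, the mean value theorem when `2H ≥ 1`),
with a constant uniform in `H ∈ (0, 1]`, so `φ_H` is bounded and `α`-Hölder on `[-1, 1]`. As `w` is
Lipschitz and bounded, `F` is `α`-Hölder in each variable separately. A left-endpoint Riemann sum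
with `p` cells of an `α`-Hölder function on `[0, 1]` is within `C p ^ (-α)` of its integral; apply
this to the inner sums, then to the outer sum of the inner integrals, which are `α`-Hölder as well.
-/

open Set Finset MeasureTheory
open scoped NNReal

lemma rpow_sub_rpow_le_rpow_sub {s a b : ℝ} (hs0 : 0 ≤ s) (hs1 : s ≤ 1) (hb : 0 ≤ b)
    (hba : b ≤ a) : a ^ s - b ^ s ≤ (a - b) ^ s := by
  have h := Real.rpow_add_le_add_rpow (sub_nonneg.2 hba) hb hs0 hs1
  rw [sub_add_cancel] at h
  linarith

lemma rpow_sub_rpow_le_mul_sub {s a b R : ℝ} (hs : 1 ≤ s) (hb : 0 ≤ b) (hba : b ≤ a)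
    (haR : a ≤ R) : a ^ s - b ^ s ≤ s * R ^ (s - 1) * (a - b) := by
  have hderiv : ∀ x ∈ interior (Icc 0 R), deriv (fun x : ℝ => x ^ s) x ≤ s * R ^ (s - 1) := by
    intro x hx
    rw [interior_Icc] at hx
    rw [Real.deriv_rpow_const]
    gcongr <;> linarith [hx.1, hx.2]
  exact (convex_Icc 0 R).image_sub_le_mul_sub_of_deriv_le
    (Real.continuous_rpow_const (by linarith)).continuousOn
    (fun x _ => (Real.hasDerivAt_rpow_const (Or.inr hs)).differentiableAt.differentiableWithinAt)
    hderiv b ⟨hb, hba.trans haR⟩ a ⟨hb.trans hba, haR⟩ hba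

lemma abs_abs_rpow_sub_abs_rpow_le {s u v : ℝ} (hs0 : 0 < s) (hs2 : s ≤ 2) (hu : |u| ≤ 3)
    (hv : |v| ≤ 3) : abs (|u| ^ s - |v| ^ s) ≤ 6 * |u - v| ^ min s 1 := by
  wlog hvu : |v| ≤ |u| generalizing u v
  · rw [abs_sub_comm, abs_sub_comm u]
    exact this hv hu (le_of_not_ge hvu)
  have hdiff : |u| - |v| ≤ |u - v| := abs_sub_abs_le_abs_sub u v
  rw [abs_of_nonneg (sub_nonneg.2 (Real.rpow_le_rpow (abs_nonneg v) hvu hs0.le))]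
  rcases le_total s 1 with hs1 | hs1
  · rw [min_eq_left hs1]
    calc |u| ^ s - |v| ^ s ≤ (|u| - |v|) ^ s :=
          rpow_sub_rpow_le_rpow_sub hs0.le hs1 (abs_nonneg v) hvu
      _ ≤ |u - v| ^ s := by gcongr
      _ ≤ 6 * |u - v| ^ s := le_mul_of_one_le_left (by positivity) (by norm_num)
  · rw [min_eq_right hs1, Real.rpow_one]
    have hpow : (3 : ℝ) ^ (s - 1) ≤ 3 := by
      calc (3 : ℝ) ^ (s - 1) ≤ 3 ^ (1 : ℝ) := by gcongr <;> linarith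
        _ = 3 := Real.rpow_one 3
    calc |u| ^ s - |v| ^ s ≤ s * 3 ^ (s - 1) * (|u| - |v|) :=
          rpow_sub_rpow_le_mul_sub hs1 (abs_nonneg v) hvu hu
      _ ≤ 2 * 3 * |u - v| := by gcongr
      _ = 6 * |u - v| := by norm_num

lemma holderOnWith_of_dist_le {X Y : Type*} [PseudoMetricSpace X] [PseudoMetricSpace Y]
    {C r : ℝ≥0} {f : X → Y} {s : Set X}
    (h : ∀ x ∈ s, ∀ y ∈ s, dist (f x) (f y) ≤ C * dist x y ^ (r : ℝ)) :
    HolderOnWith C r f s := by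
  intro x hx y hy
  rw [edist_dist, edist_dist, ENNReal.ofReal_rpow_of_nonneg dist_nonneg r.coe_nonneg,
    ← ENNReal.ofReal_coe_nnreal, ← ENNReal.ofReal_mul C.coe_nonneg]
  exact ENNReal.ofReal_le_ofReal (h x hx y hy)

lemma abs_mul_sub_integral_le_of_holderOnWith {f : ℝ → ℝ} {C r : ℝ≥0} (hr : 0 < r) {a b : ℝ}
    (hab : a ≤ b) (hf : HolderOnWith C r f (Icc a b)) :
    |(b - a) * f a - ∫ x in a..b, f x| ≤ C * (b - a) ^ (r : ℝ) * (b - a) := by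
  have hint : IntervalIntegrable f volume a b :=
    (hf.continuousOn hr).intervalIntegrable_of_Icc hab
  rw [← smul_eq_mul, ← intervalIntegral.integral_const,
    ← intervalIntegral.integral_sub intervalIntegrable_const hint]
  have hbound : ∀ x ∈ uIoc a b, ‖f a - f x‖ ≤ C * (b - a) ^ (r : ℝ) := by
    intro x hx
    rw [uIoc_of_le hab] at hx
    rw [← dist_eq_norm]
    refine hf.dist_le_of_le ⟨le_rfl, hab⟩ (Ioc_subset_Icc_self hx) ?_
    rw [Real.dist_eq, abs_sub_comm, abs_of_nonneg (by linarith [hx.1])]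
    linarith [hx.2]
  simpa [abs_of_nonneg (sub_nonneg.2 hab)] using
    intervalIntegral.norm_integral_le_of_norm_le_const hbound

theorem abs_riemannSum_sub_integral_le_of_holderOnWith {f : ℝ → ℝ} {C r : ℝ≥0} (hr : 0 < r)
    (hf : HolderOnWith C r f (Icc 0 1)) {p : ℕ} (hp : 0 < p) :
    |(p : ℝ)⁻¹ * ∑ k ∈ range p, f (k / p) - ∫ x in (0 : ℝ)..1, f x|
      ≤ C * (p : ℝ) ^ (-(r : ℝ)) := by
  have hp' : (0 : ℝ) < p := by exact_mod_cast hp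
  set a : ℕ → ℝ := fun k => k / p with ha
  have hlen : ∀ k, a (k + 1) - a k = (p : ℝ)⁻¹ := fun k => by
    simp only [ha]; push_cast; field_simp; ring
  have hmono : ∀ k, a k ≤ a (k + 1) := fun k => by
    linarith [hlen k, inv_pos.2 hp']
  have hcell : ∀ k < p, Icc (a k) (a (k + 1)) ⊆ Icc 0 1 := fun k hk => by
    refine Icc_subset_Icc (by positivity) ?_
    rw [ha, div_le_one hp']
    exact_mod_cast hk
  have hsplit : ∫ x in (0 : ℝ)..1, f x = ∑ k ∈ range p, ∫ x in a k..a (k + 1), f x := by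
    rw [intervalIntegral.sum_integral_adjacent_intervals fun k hk =>
      ((hf.continuousOn hr).mono (hcell k hk)).intervalIntegrable_of_Icc (hmono k)]
    simp [ha, hp'.ne']
  rw [hsplit, mul_sum, ← sum_sub_distrib]
  calc |∑ k ∈ range p, ((p : ℝ)⁻¹ * f (a k) - ∫ x in a k..a (k + 1), f x)|
      ≤ ∑ k ∈ range p, |(p : ℝ)⁻¹ * f (a k) - ∫ x in a k..a (k + 1), f x| :=
        abs_sum_le_sum_abs _ _
    _ ≤ ∑ _k ∈ range p, C * (p : ℝ)⁻¹ ^ (r : ℝ) * (p : ℝ)⁻¹ := sum_le_sum fun k hk => by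
        simpa only [hlen] using abs_mul_sub_integral_le_of_holderOnWith hr (hmono k)
          (hf.mono (hcell k (mem_range.1 hk)))
    _ = C * (p : ℝ) ^ (-(r : ℝ)) := by
        rw [sum_const, card_range, nsmul_eq_mul, Real.inv_rpow hp'.le, Real.rpow_neg hp'.le]
        field_simp

lemma holderOnWith_intervalIntegral {F : ℝ → ℝ → ℝ} {C r : ℝ≥0} {s : Set ℝ}
    (hFx : ∀ y ∈ Icc (0 : ℝ) 1, HolderOnWith C r (fun x => F x y) s)
    (hFy : ∀ x ∈ s, IntervalIntegrable (F x) volume 0 1) :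
    HolderOnWith C r (fun x => ∫ y in (0 : ℝ)..1, F x y) s := by
  refine holderOnWith_of_dist_le fun x hx x' hx' => ?_
  rw [dist_eq_norm, ← intervalIntegral.integral_sub (hFy x hx) (hFy x' hx')]
  have hbound : ∀ y ∈ uIoc (0 : ℝ) 1, ‖F x y - F x' y‖ ≤ C * dist x x' ^ (r : ℝ) := by
    intro y hy
    rw [uIoc_of_le zero_le_one] at hy
    rw [← dist_eq_norm]
    exact (hFx y (Ioc_subset_Icc_self hy)).dist_le hx hx'
  simpa using intervalIntegral.norm_integral_le_of_norm_le_const hbound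

theorem abs_doubleRiemannSum_sub_integral_le_of_holderOnWith {F : ℝ → ℝ → ℝ} {C r : ℝ≥0}
    (hr : 0 < r) (hFx : ∀ y ∈ Icc (0 : ℝ) 1, HolderOnWith C r (fun x => F x y) (Icc 0 1))
    (hFy : ∀ x ∈ Icc (0 : ℝ) 1, HolderOnWith C r (F x) (Icc 0 1)) {p : ℕ} (hp : 0 < p) :
    |((p : ℝ) ^ 2)⁻¹ * ∑ k ∈ range p, ∑ l ∈ range p, F (k / p) (l / p)
        - ∫ x in (0 : ℝ)..1, ∫ y in (0 : ℝ)..1, F x y|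
      ≤ 2 * C * (p : ℝ) ^ (-(r : ℝ)) := by
  have hp' : (0 : ℝ) < p := by exact_mod_cast hp
  set G : ℝ → ℝ := fun x => ∫ y in (0 : ℝ)..1, F x y
  have hG : HolderOnWith C r G (Icc 0 1) := holderOnWith_intervalIntegral hFx fun x hx =>
    ((hFy x hx).continuousOn hr).intervalIntegrable_of_Icc zero_le_one
  have hinner : ∀ k ∈ range p,
      |(p : ℝ)⁻¹ * ∑ l ∈ range p, F (k / p) (l / p) - G (k / p)| ≤ C * (p : ℝ) ^ (-(r : ℝ)) :=
    fun k hk => abs_riemannSum_sub_integral_le_of_holderOnWith hr (hFy _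
      ⟨by positivity, (div_le_one hp').2 (by exact_mod_cast (mem_range.1 hk).le)⟩) hp
  have hsplit : ((p : ℝ) ^ 2)⁻¹ * ∑ k ∈ range p, ∑ l ∈ range p, F (k / p) (l / p)
        - ∫ x in (0 : ℝ)..1, G x
      = (p : ℝ)⁻¹ * ∑ k ∈ range p, ((p : ℝ)⁻¹ * ∑ l ∈ range p, F (k / p) (l / p) - G (k / p))
        + ((p : ℝ)⁻¹ * ∑ k ∈ range p, G (k / p) - ∫ x in (0 : ℝ)..1, G x) := by
    rw [sum_sub_distrib, ← mul_sum]
    ring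
  rw [hsplit]
  calc _ ≤ (p : ℝ)⁻¹ * ∑ k ∈ range p, C * (p : ℝ) ^ (-(r : ℝ)) + C * (p : ℝ) ^ (-(r : ℝ)) := by
        refine (abs_add_le _ _).trans (add_le_add ?_
          (abs_riemannSum_sub_integral_le_of_holderOnWith hr hG hp))
        rw [abs_mul, abs_of_pos (inv_pos.2 hp')]
        gcongr
        exact (abs_sum_le_sum_abs _ _).trans (sum_le_sum hinner)
    _ = 2 * C * (p : ℝ) ^ (-(r : ℝ)) := by
        rw [sum_const, card_range, nsmul_eq_mul]
        field_simp
        ring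

lemma abs_add_natCast_sub_two_le {x : ℝ} (hx : |x| ≤ 1) {k : ℕ} (hk : k < 5) :
    |x + k - 2| ≤ 3 := by
  have hk4 : (k : ℝ) ≤ 4 := by exact_mod_cast Nat.lt_succ_iff.1 hk
  rw [abs_le] at hx ⊢
  constructor <;> linarith [Nat.cast_nonneg (α := ℝ) k]

lemma abs_half_sum_alternating_choose_le {c : ℕ → ℝ} {B : ℝ} (hc : ∀ k < 5, |c k| ≤ B) :
    |(1 / 2) * ∑ k ∈ range 5, (-1 : ℝ) ^ (k + 1) * (Nat.choose 4 k : ℝ) * c k| ≤ 8 * B := by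
  calc _ ≤ (1 / 2) * ∑ k ∈ range 5, (Nat.choose 4 k : ℝ) * B := by
        rw [abs_mul, abs_of_pos (by norm_num : (0 : ℝ) < 1 / 2)]
        refine mul_le_mul_of_nonneg_left ((abs_sum_le_sum_abs _ _).trans
          (sum_le_sum fun k hk => ?_)) (by norm_num)
        rw [abs_mul, abs_mul, abs_pow, abs_neg, abs_one, one_pow, one_mul, Nat.abs_cast]
        exact mul_le_mul_of_nonneg_left (hc k (mem_range.1 hk)) (Nat.cast_nonneg _)
    _ = 8 * B := by
        rw [← sum_mul, ← Nat.cast_sum, Nat.sum_range_choose]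
        push_cast
        ring

lemma abs_phiH_le {H x : ℝ} (hH0 : 0 ≤ H) (hH1 : H ≤ 1) (hx : |x| ≤ 1) : |phiH H x| ≤ 72 := by
  have hterm : ∀ k : ℕ, k < 5 → abs (|x + k - 2| ^ (2 * H)) ≤ 9 := by
    intro k hk
    rw [abs_of_nonneg (by positivity)]
    calc |x + k - 2| ^ (2 * H) ≤ 3 ^ (2 * H) := by
          gcongr; exact abs_add_natCast_sub_two_le hx hk
      _ ≤ 3 ^ (2 : ℝ) := by gcongr <;> linarith
      _ = 9 := by norm_num
  calc |phiH H x| ≤ 8 * 9 :=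
        abs_half_sum_alternating_choose_le (c := fun k : ℕ => |x + k - 2| ^ (2 * H)) hterm
    _ = 72 := by norm_num

lemma abs_phiH_sub_phiH_le {H a b : ℝ} (hH0 : 0 < H) (hH1 : H ≤ 1) (ha : |a| ≤ 1)
    (hb : |b| ≤ 1) : |phiH H a - phiH H b| ≤ 48 * |a - b| ^ min (2 * H) 1 := by
  have hterm : ∀ k : ℕ, k < 5 → abs (|a + k - 2| ^ (2 * H) - |b + k - 2| ^ (2 * H)) ≤
      6 * |a - b| ^ min (2 * H) 1 := by
    intro k hk
    have h := abs_abs_rpow_sub_abs_rpow_le (s := 2 * H) (by linarith) (by linarith)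
      (abs_add_natCast_sub_two_le ha hk) (abs_add_natCast_sub_two_le hb hk)
    rwa [show a + k - 2 - (b + k - 2) = a - b by ring] at h
  have h := abs_half_sum_alternating_choose_le
    (c := fun k : ℕ => |a + k - 2| ^ (2 * H) - |b + k - 2| ^ (2 * H)) hterm
  rw [show (8 : ℝ) * (6 * |a - b| ^ min (2 * H) 1) = 48 * |a - b| ^ min (2 * H) 1 by ring] at h
  convert h using 2
  simp only [phiH, ← mul_sub, ← sum_sub_distrib]

lemma phiH_neg (H x : ℝ) : phiH H (-x) = phiH H x := by
  simp only [phiH, sum_range_succ, sum_range_zero]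
  norm_num
  rw [show -x - 2 = -(x + 4 - 2) by ring, show -x + 1 - 2 = -(x + 3 - 2) by ring,
    show -x + 3 - 2 = -(x + 1 - 2) by ring, show -x + 4 - 2 = -(x - 2) by ring]
  simp only [abs_neg]
  ring

noncomputable def kappaIntegrand (w : ℝ → ℝ) (H x y : ℝ) : ℝ := w x * w y * phiH H (x - y)

lemma kappaIntegrand_comm (w : ℝ → ℝ) (H x y : ℝ) :
    kappaIntegrand w H x y = kappaIntegrand w H y x := by
  rw [kappaIntegrand, kappaIntegrand, ← neg_sub x y, phiH_neg, mul_comm (w x)]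

lemma holderOnWith_kappaIntegrand {w : ℝ → ℝ} {L M : ℝ≥0}
    (hw : LipschitzOnWith L w (Icc 0 1)) (hM : ∀ x ∈ Icc (0 : ℝ) 1, |w x| ≤ M)
    {H : ℝ} (hH0 : 0 < H) (hH1 : H ≤ 1) {y : ℝ} (hy : y ∈ Icc (0 : ℝ) 1) :
    HolderOnWith (48 * M ^ 2 + 72 * M * L) (min (2 * H) 1).toNNReal
      (fun x => kappaIntegrand w H x y) (Icc 0 1) := by
  refine holderOnWith_of_dist_le fun x hx x' hx' => ?_
  rw [Real.coe_toNNReal _ (by positivity), Real.dist_eq, Real.dist_eq]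
  have hunit : ∀ {a b : ℝ}, a ∈ Icc (0 : ℝ) 1 → b ∈ Icc (0 : ℝ) 1 → |a - b| ≤ 1 :=
    fun ha hb => abs_sub_le_iff.2 ⟨by linarith [ha.2, hb.1], by linarith [ha.1, hb.2]⟩
  have hφ := abs_phiH_sub_phiH_le hH0 hH1 (hunit hx hy) (hunit hx' hy)
  rw [sub_sub_sub_cancel_right] at hφ
  have hwx : |w x - w x'| ≤ L * |x - x'| := by
    simpa only [Real.dist_eq] using hw.dist_le_mul x hx x' hx'
  have hlin : |x - x'| ≤ |x - x'| ^ min (2 * H) 1 :=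
    Real.self_le_rpow_of_le_one (abs_nonneg _) (hunit hx hx') (min_le_right _ _)
  calc |kappaIntegrand w H x y - kappaIntegrand w H x' y|
      = |w y| * |(w x - w x') * phiH H (x - y)
          + w x' * (phiH H (x - y) - phiH H (x' - y))| := by
        rw [← abs_mul, kappaIntegrand, kappaIntegrand]; ring_nf
    _ ≤ M * (L * |x - x'| * 72 + M * (48 * |x - x'| ^ min (2 * H) 1)) := by
        refine mul_le_mul (hM y hy) ((abs_add_le _ _).trans ?_) (abs_nonneg _) M.coe_nonneg
        rw [abs_mul, abs_mul]
        gcongr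
        exacts [abs_phiH_le hH0.le hH1 (hunit hx hy), hM x' hx']
    _ ≤ (48 * M ^ 2 + 72 * M * L) * |x - x'| ^ min (2 * H) 1 := by
        have := mul_le_mul_of_nonneg_left hlin (by positivity : (0 : ℝ) ≤ 72 * M * L)
        nlinarith

lemma kappaP_eq_doubleRiemannSum (w : ℝ → ℝ) (p : ℕ) (H : ℝ) :
    kappaP w p H = ((p : ℝ) ^ 2)⁻¹ * ∑ k ∈ range p, ∑ l ∈ range p,
      kappaIntegrand w H (k / p) (l / p) := by
  simp only [kappaP, kappaIntegrand, sub_div]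

theorem kappaP_riemann_approximation_general (w : ℝ → ℝ)
    (L : NNReal) (hw : LipschitzOnWith L w (Set.Icc 0 1))
    (Hm Hp : ℝ) (h0 : 0 < Hm) (h2 : Hp < 1) :
    ∃ c > (0 : ℝ), ∀ p : ℕ, 1 ≤ p → ∀ H ∈ Set.Icc Hm Hp,
      |kappaP w p H - kappaInf w H| ≤ c * (p : ℝ) ^ (-(min (2 * H) 1)) := by
  obtain ⟨B, hB⟩ := isCompact_Icc.exists_bound_of_continuousOn hw.continuousOn
  have hM : ∀ x ∈ Icc (0 : ℝ) 1, |w x| ≤ B.toNNReal := fun x hx =>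
    (hB x hx).trans (Real.le_coe_toNNReal B)
  set K : ℝ≥0 := 48 * B.toNNReal ^ 2 + 72 * B.toNNReal * L
  refine ⟨2 * K + 1, by positivity, fun p hp H hH => ?_⟩
  have hH0 : 0 < H := h0.trans_le hH.1
  have hH1 : H ≤ 1 := (hH.2.trans_lt h2).le
  have hα : (0 : ℝ) ≤ min (2 * H) 1 := by positivity
  have hFx := fun y (hy : y ∈ Icc (0 : ℝ) 1) => holderOnWith_kappaIntegrand hw hM hH0 hH1 hy
  have hFy : ∀ x ∈ Icc (0 : ℝ) 1, HolderOnWith K (min (2 * H) 1).toNNReal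
      (kappaIntegrand w H x) (Icc 0 1) := fun x hx => by
    rw [show kappaIntegrand w H x = fun y => kappaIntegrand w H y x from
      funext (kappaIntegrand_comm w H x)]
    exact hFx x hx
  have key := abs_doubleRiemannSum_sub_integral_le_of_holderOnWith
    (Real.toNNReal_pos.2 (by positivity)) hFx hFy hp
  rw [Real.coe_toNNReal _ hα] at key
  rw [kappaP_eq_doubleRiemannSum]
  calc _ ≤ 2 * K * (p : ℝ) ^ (-min (2 * H) 1) := key
    _ ≤ (2 * K + 1) * (p : ℝ) ^ (-min (2 * H) 1) := by gcongr; linarith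

theorem kappaP_riemann_approximation (w : ℝ → ℝ) (hwcont : ContinuousOn w (Set.Icc 0 1))
    (L : NNReal) (hw : LipschitzOnWith L w (Set.Icc 0 1))
    (Hm Hp : ℝ) (h0 : 0 < Hm) (h1 : Hm ≤ Hp) (h2 : Hp < 1) :
    ∃ c > (0 : ℝ), ∀ p : ℕ, 1 ≤ p → ∀ H ∈ Set.Icc Hm Hp,
      |kappaP w p H - kappaInf w H| ≤ c * (p : ℝ) ^ (-(min (2 * H) 1)) :=
  kappaP_riemann_approximation_general w L hw Hm Hp h0 h2
end

section
/- Let K ≥ 0 be an integer and w : [0,1] → ℝ be K times continuously differentiable with ∂^i w(0) = ∂^i w(1) = 0 for all 0 ≤ i < K. For integers p ≥ 1 and -K ≤ l ≤ p-1, define α_{l,p} = ∑_{i = max(0,-l)}^{min(K, p-1-l)} C(K,i) (-1)^i w((l+i)/p). Then there is a constant C > 0 depending only on w and K such that |α_{l,p}| ≤ C p^{-K} for all p ≥ 1 and all -K ≤ l ≤ p-1. -/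
/-!
Up to the sign `(-1) ^ K`, `alphaLP K w l p` is the `K`-th forward difference, at `l` with step
`1`, of the samples `w (j / p)` extended by zero outside `0 ≤ j < p`. If the whole stencil
`l, …, l + K` lies in the grid, this is the `K`-th difference of `w` at `l / p` with step `1 / p`;
it kills the Taylor polynomial of order `K - 1` at `l / p`, and the `K + 1` Taylor remainders are
`O(p⁻ᴷ)`. Otherwise every grid point of the stencil lies within `K / p` of `0` or of `1`, where the
vanishing of the first `K` derivatives gives `|w x| ≤ M * min x (1 - x) ^ K`, so each term is
already `O(p⁻ᴷ)`.
-/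

open Finset hiding Icc
open Set fwdDiff
open scoped Nat Pointwise

/-- The pre-averaged moving-average weights. -/
noncomputable def alphaLP (K : ℕ) (w : ℝ → ℝ) (l : ℤ) (p : ℕ) : ℝ :=
  ∑ i ∈ Finset.range (K + 1),
    if 0 ≤ l + (i : ℤ) ∧ l + (i : ℤ) ≤ (p : ℤ) - 1 then
      (K.choose i : ℝ) * (-1) ^ i * w (((l : ℝ) + i) / p)
    else 0

section FwdDiff

variable {M M' G : Type*} [AddCommMonoid M] [AddCommMonoid M'] [AddCommGroup G]

theorem fwdDiff_iter_eq_of_forall_shift_eq {f : M → G} {f' : M' → G} {h y : M} {h' y' : M'}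
    {n : ℕ} (hf : ∀ k ≤ n, f (y + k • h) = f' (y' + k • h')) :
    Δ_[h] ^[n] f y = Δ_[h'] ^[n] f' y' := by
  simp only [fwdDiff_iter_eq_sum_shift]
  exact sum_congr rfl fun k hk ↦ by rw [hf k (Nat.lt_succ_iff.mp (mem_range.mp hk))]

theorem abs_fwdDiff_iter_le (f : M → ℝ) (h y : M) (n : ℕ) {B : ℝ}
    (hB : ∀ k ≤ n, |f (y + k • h)| ≤ B) : |Δ_[h] ^[n] f y| ≤ 2 ^ n * B := by
  have hchoose : (2 : ℝ) ^ n = ∑ k ∈ range (n + 1), (n.choose k : ℝ) := by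
    exact_mod_cast (Nat.sum_range_choose n).symm
  rw [fwdDiff_iter_eq_sum_shift, hchoose, sum_mul]
  refine (abs_sum_le_sum_abs _ _).trans (sum_le_sum fun k hk ↦ ?_)
  rw [zsmul_eq_mul, abs_mul]
  push_cast
  rw [abs_mul, abs_pow, abs_neg, abs_one, one_pow, one_mul, Nat.abs_cast]
  exact mul_le_mul_of_nonneg_left (hB k (Nat.lt_succ_iff.mp (mem_range.mp hk))) (Nat.cast_nonneg _)

end FwdDiff

theorem fwdDiff_iter_taylorWithinEval (f : ℝ → ℝ) (s : Set ℝ) (n : ℕ) (a h : ℝ) :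
    Δ_[h] ^[n + 1] (taylorWithinEval f n s a) a = 0 := by
  have hpoly : Δ_[h] ^[n + 1] (taylorWithinEval f n s a) a = Δ_[1] ^[n + 1]
      (fun r : ℝ ↦ ∑ k ∈ range (n + 1),
        iteratedDerivWithin k f s a * h ^ k / k ! * r ^ k) 0 := by
    refine fwdDiff_iter_eq_of_forall_shift_eq fun j _ ↦ ?_
    simp only [taylor_within_apply, smul_eq_mul, nsmul_eq_mul, mul_one, zero_add,
      add_sub_cancel_left]
    exact sum_congr rfl fun k _ ↦ by ring
  rw [hpoly, fwdDiff_iter_sum_mul_pow_eq_zero, Pi.zero_apply]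

theorem iteratedDerivWithin_eq_of_subset {𝕜 F : Type*} [NontriviallyNormedField 𝕜]
    [NormedAddCommGroup F] [NormedSpace 𝕜 F] {f : 𝕜 → F} {s t : Set 𝕜} {x : 𝕜} {n : ℕ}
    (hst : s ⊆ t) (hs : UniqueDiffOn 𝕜 s) (ht : UniqueDiffOn 𝕜 t) (hf : ContDiffOn 𝕜 n f t)
    (hx : x ∈ s) : iteratedDerivWithin n f s x = iteratedDerivWithin n f t x := by
  simp only [iteratedDerivWithin_eq_iteratedFDerivWithin,
    iteratedFDerivWithin_subset hst hs ht hf hx]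

section Taylor

variable {f : ℝ → ℝ} {a b C : ℝ} {n : ℕ}

theorem abs_sub_taylorWithinEval_le {x : ℝ} (hab : a ≤ b) (hf : ContDiffOn ℝ (n + 1) f (Icc a b))
    (hC : ∀ y ∈ Icc a b, ‖iteratedDerivWithin (n + 1) f (Icc a b) y‖ ≤ C) (hx : x ∈ Icc a b) :
    |f x - taylorWithinEval f n (Icc a b) a x| ≤ C * (x - a) ^ (n + 1) := by
  have hC₀ : 0 ≤ C := (norm_nonneg _).trans (hC a ⟨le_rfl, hab⟩)
  have hxa : 0 ≤ x - a := sub_nonneg.mpr hx.1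
  refine (taylor_mean_remainder_bound hab hf hx hC).trans (div_le_self (by positivity) ?_)
  exact_mod_cast n.factorial_pos

theorem abs_le_of_iteratedDerivWithin_left_eq_zero (hab : a ≤ b)
    (hf : ContDiffOn ℝ (n + 1) f (Icc a b))
    (hzero : ∀ k ≤ n, iteratedDerivWithin k f (Icc a b) a = 0)
    (hC : ∀ y ∈ Icc a b, ‖iteratedDerivWithin (n + 1) f (Icc a b) y‖ ≤ C)
    {x : ℝ} (hx : x ∈ Icc a b) : |f x| ≤ C * (x - a) ^ (n + 1) := by
  have hT : taylorWithinEval f n (Icc a b) a x = 0 := by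
    rw [taylor_within_apply]
    exact sum_eq_zero fun k hk ↦ by
      rw [hzero k (Nat.lt_succ_iff.mp (mem_range.mp hk)), smul_zero]
  simpa [hT] using abs_sub_taylorWithinEval_le hab hf hC hx

theorem abs_le_of_iteratedDerivWithin_right_eq_zero (hab : a ≤ b)
    (hf : ContDiffOn ℝ (n + 1) f (Icc a b))
    (hzero : ∀ k ≤ n, iteratedDerivWithin k f (Icc a b) b = 0)
    (hC : ∀ y ∈ Icc a b, ‖iteratedDerivWithin (n + 1) f (Icc a b) y‖ ≤ C)
    {x : ℝ} (hx : x ∈ Icc a b) : |f x| ≤ C * (b - x) ^ (n + 1) := by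
  have hmaps : MapsTo (fun y ↦ a + b - y) (Icc a b) (Icc a b) := fun y hy ↦
    ⟨by linarith [hy.2], by linarith [hy.1]⟩
  have hreflect : (a + b) +ᵥ -Icc a b = Icc a b := by
    rw [Set.neg_Icc]
    ext y
    simp
  have hderiv (k : ℕ) (y : ℝ) : iteratedDerivWithin k (fun y ↦ f (a + b - y)) (Icc a b) y =
      (-1) ^ k * iteratedDerivWithin k f (Icc a b) (a + b - y) := by
    simp only [iteratedDerivWithin_comp_const_sub, hreflect, smul_eq_mul]
  have hg : ContDiffOn ℝ (n + 1) (fun y ↦ f (a + b - y)) (Icc a b) :=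
    hf.comp (contDiffOn_const.sub contDiffOn_id) hmaps
  have key := abs_le_of_iteratedDerivWithin_left_eq_zero hab hg
    (fun k hk ↦ by rw [hderiv, add_sub_cancel_left, hzero k hk, mul_zero])
    (fun y hy ↦ by simpa [hderiv] using hC _ (hmaps hy)) (hmaps hx)
  have hbx : a + b - x - a = b - x := by ring
  simpa only [hbx, sub_sub_cancel] using key

theorem abs_le_of_iteratedDerivWithin_eq_zero (hab : a ≤ b)
    (hf : ContDiffOn ℝ (n + 1) f (Icc a b))
    (hzero : ∀ k ≤ n,
      iteratedDerivWithin k f (Icc a b) a = 0 ∧ iteratedDerivWithin k f (Icc a b) b = 0)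
    (hC : ∀ y ∈ Icc a b, ‖iteratedDerivWithin (n + 1) f (Icc a b) y‖ ≤ C)
    {x : ℝ} (hx : x ∈ Icc a b) : |f x| ≤ C * min (x - a) (b - x) ^ (n + 1) := by
  rcases le_total (x - a) (b - x) with h | h
  · rw [min_eq_left h]
    exact abs_le_of_iteratedDerivWithin_left_eq_zero hab hf (fun k hk ↦ (hzero k hk).1) hC hx
  · rw [min_eq_right h]
    exact abs_le_of_iteratedDerivWithin_right_eq_zero hab hf (fun k hk ↦ (hzero k hk).2) hC hx

theorem abs_fwdDiff_iter_le_of_norm_iteratedDerivWithin_le {s : Set ℝ} {h : ℝ}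
    (hs : UniqueDiffOn ℝ s) (hh : 0 < h) (hsub : Icc a (a + (n + 1) * h) ⊆ s)
    (hf : ContDiffOn ℝ (n + 1) f s)
    (hC : ∀ y ∈ Icc a (a + (n + 1) * h), ‖iteratedDerivWithin (n + 1) f s y‖ ≤ C) :
    |Δ_[h] ^[n + 1] f a| ≤ 2 ^ (n + 1) * (C * ((n + 1) * h) ^ (n + 1)) := by
  set I := Icc a (a + (n + 1) * h)
  have hab : a < a + (n + 1) * h := lt_add_of_pos_right a (by positivity)
  have hCI : ∀ y ∈ I, ‖iteratedDerivWithin (n + 1) f I y‖ ≤ C := fun y hy ↦ by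
    rw [iteratedDerivWithin_eq_of_subset hsub (uniqueDiffOn_Icc hab) hs hf hy]
    exact hC y hy
  have hsplit : f = (f - taylorWithinEval f n I a) + taylorWithinEval f n I a := by
    rw [sub_add_cancel]
  rw [hsplit, fwdDiff_iter_add, Pi.add_apply, fwdDiff_iter_taylorWithinEval, add_zero]
  refine abs_fwdDiff_iter_le _ _ _ _ fun k hk ↦ ?_
  have hk' : (k : ℝ) ≤ n + 1 := by exact_mod_cast hk
  have hx : a + k • h ∈ I :=
    ⟨le_add_of_nonneg_right (nsmul_nonneg hh.le k), by rw [nsmul_eq_mul]; gcongr⟩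
  refine (abs_sub_taylorWithinEval_le hab.le (hf.mono hsub) hCI hx).trans ?_
  have hC₀ : 0 ≤ C := (norm_nonneg _).trans (hCI a ⟨le_rfl, hab.le⟩)
  simp only [nsmul_eq_mul, add_sub_cancel_left]
  gcongr

end Taylor

theorem IsCompact.exists_pos_bound_of_continuousOn {α E : Type*} [TopologicalSpace α]
    [SeminormedAddCommGroup E] {s : Set α} (hs : IsCompact s) {f : α → E}
    (hf : ContinuousOn f s) : ∃ C > 0, ∀ x ∈ s, ‖f x‖ ≤ C :=
  let ⟨C, hC⟩ := hs.exists_bound_of_continuousOn hf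
  ⟨max C 1, by positivity, fun x hx ↦ (hC x hx).trans (le_max_left _ _)⟩

noncomputable def gridSample (w : ℝ → ℝ) (p : ℕ) (j : ℤ) : ℝ :=
  if 0 ≤ j ∧ j ≤ (p : ℤ) - 1 then w (j / p) else 0

theorem alphaLP_eq_neg_one_pow_mul_fwdDiff_iter (K : ℕ) (w : ℝ → ℝ) (l : ℤ) (p : ℕ) :
    alphaLP K w l p = (-1) ^ K * Δ_[1] ^[K] (gridSample w p) l := by
  rw [fwdDiff_iter_eq_sum_shift, mul_sum, alphaLP]
  refine sum_congr rfl fun i hi ↦ ?_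
  obtain ⟨m, rfl⟩ := Nat.exists_eq_add_of_le (Nat.lt_succ_iff.mp (mem_range.mp hi))
  have hsign : (-1 : ℝ) ^ (i + m) * (-1) ^ m = (-1) ^ i := by
    rw [← pow_add, add_assoc, ← two_mul, pow_add, pow_mul, neg_one_sq, one_pow, mul_one]
  simp only [gridSample, Nat.add_sub_cancel_left, zsmul_eq_mul, nsmul_eq_mul, mul_one]
  push_cast
  split_ifs
  · linear_combination -(((i + m).choose i : ℝ) * w ((l + i) / p)) * hsign
  · rw [mul_zero, mul_zero]

theorem abs_gridSample_le {w : ℝ → ℝ} {p : ℕ} {j : ℤ} {B : ℝ} (hB : 0 ≤ B)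
    (hw : 0 ≤ j → j ≤ (p : ℤ) - 1 → |w (j / p)| ≤ B) : |gridSample w p j| ≤ B := by
  unfold gridSample
  split_ifs with h
  · exact hw h.1 h.2
  · rwa [abs_zero]

theorem intCast_div_natCast_mem_Icc {p : ℕ} {j : ℤ} (hj₀ : 0 ≤ j) (hj₁ : j ≤ (p : ℤ) - 1) :
    (j : ℝ) / p ∈ Icc 0 1 := by
  have hjp : (j : ℝ) ≤ p := by exact_mod_cast (by omega : j ≤ p)
  have hj₀' : (0 : ℝ) ≤ j := by exact_mod_cast hj₀
  exact ⟨by positivity, div_le_one_of_le₀ hjp (Nat.cast_nonneg p)⟩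

section GridSample

variable {w : ℝ → ℝ} {n p : ℕ} {l : ℤ} {M : ℝ}

theorem abs_fwdDiff_iter_gridSample_le_of_interior
    (hsmooth : ContDiffOn ℝ (n + 1) w (Icc 0 1))
    (hM : ∀ y ∈ Icc (0 : ℝ) 1, ‖iteratedDerivWithin (n + 1) w (Icc 0 1) y‖ ≤ M)
    (hl₀ : 0 ≤ l) (hl₁ : l + (n + 1) ≤ (p : ℤ) - 1) :
    |Δ_[1] ^[n + 1] (gridSample w p) l| ≤ 2 ^ (n + 1) * (M * ((n + 1) * (p : ℝ)⁻¹) ^ (n + 1)) := by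
  have hp : (0 : ℝ) < p := by exact_mod_cast (by omega : (0 : ℤ) < p)
  have hl₀' : (0 : ℝ) ≤ l := by exact_mod_cast hl₀
  have hsub : Icc ((l : ℝ) / p) (l / p + (n + 1) * (p : ℝ)⁻¹) ⊆ Icc 0 1 := by
    refine Icc_subset_Icc (by positivity) ?_
    rw [← div_eq_mul_inv, ← add_div, div_le_one hp]
    exact_mod_cast (by omega : l + (n + 1) ≤ (p : ℤ))
  rw [fwdDiff_iter_eq_of_forall_shift_eq (f' := w) (y' := (l : ℝ) / p) (h' := (p : ℝ)⁻¹)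
    fun k hk ↦ ?_]
  · exact abs_fwdDiff_iter_le_of_norm_iteratedDerivWithin_le (uniqueDiffOn_Icc zero_lt_one)
      (by positivity) hsub hsmooth fun y hy ↦ hM y (hsub hy)
  · simp only [gridSample, nsmul_eq_mul, mul_one]
    rw [if_pos (by omega)]
    push_cast
    congr 1
    ring

theorem abs_fwdDiff_iter_gridSample_le_of_boundary
    (hsmooth : ContDiffOn ℝ (n + 1) w (Icc 0 1))
    (hzero : ∀ k ≤ n,
      iteratedDerivWithin k w (Icc 0 1) 0 = 0 ∧ iteratedDerivWithin k w (Icc 0 1) 1 = 0)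
    (hM : ∀ y ∈ Icc (0 : ℝ) 1, ‖iteratedDerivWithin (n + 1) w (Icc 0 1) y‖ ≤ M)
    (hl : l < 0 ∨ (p : ℤ) ≤ l + (n + 1)) :
    |Δ_[1] ^[n + 1] (gridSample w p) l| ≤ 2 ^ (n + 1) * (M * ((n + 1) * (p : ℝ)⁻¹) ^ (n + 1)) := by
  have hM₀ : 0 ≤ M := (norm_nonneg _).trans (hM 0 ⟨le_rfl, zero_le_one⟩)
  refine abs_fwdDiff_iter_le _ _ _ _ fun k hk ↦ abs_gridSample_le (by positivity) fun hj₀ hj₁ ↦ ?_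
  rw [nsmul_one] at hj₀ hj₁ ⊢
  have hx := intCast_div_natCast_mem_Icc hj₀ hj₁
  have hp : (0 : ℝ) < p := by exact_mod_cast (by omega : (0 : ℤ) < p)
  have hk' : (k : ℝ) ≤ n + 1 := by exact_mod_cast hk
  refine (abs_le_of_iteratedDerivWithin_eq_zero zero_le_one hsmooth hzero hM hx).trans ?_
  gcongr
  · exact le_min (sub_nonneg.mpr hx.1) (sub_nonneg.mpr hx.2)
  rw [← div_eq_mul_inv]
  push_cast
  rcases hl with hl | hl
  · have hl' : (l : ℝ) ≤ -1 := by exact_mod_cast (by omega : l ≤ -1)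
    refine min_le_of_left_le ?_
    rw [sub_zero, div_le_div_iff_of_pos_right hp]
    linarith
  · have hl' : (p : ℝ) ≤ l + (n + 1) := by exact_mod_cast hl
    refine min_le_of_right_le ?_
    rw [one_sub_div hp.ne', div_le_div_iff_of_pos_right hp]
    linarith

end GridSample

theorem alphaLP_bound (K : ℕ) (w : ℝ → ℝ)
    (hsmooth : ContDiffOn ℝ K w (Set.Icc 0 1))
    (hbound : ∀ i : ℕ, i < K →
      iteratedDerivWithin i w (Set.Icc 0 1) 0 = 0 ∧
      iteratedDerivWithin i w (Set.Icc 0 1) 1 = 0) :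
    ∃ C > (0 : ℝ), ∀ p : ℕ, 1 ≤ p → ∀ l : ℤ, -(K : ℤ) ≤ l → l ≤ (p : ℤ) - 1 →
      |alphaLP K w l p| ≤ C * ((p : ℝ) ^ K)⁻¹ := by
  obtain _ | n := K
  · obtain ⟨M, hM₀, hM⟩ := isCompact_Icc.exists_pos_bound_of_continuousOn hsmooth.continuousOn
    refine ⟨M, hM₀, fun p _ l _ _ ↦ ?_⟩
    rw [alphaLP_eq_neg_one_pow_mul_fwdDiff_iter, pow_zero, pow_zero, inv_one, mul_one, one_mul]
    exact abs_gridSample_le hM₀.le fun hj₀ hj₁ ↦ hM _ (intCast_div_natCast_mem_Icc hj₀ hj₁)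
  obtain ⟨M, hM₀, hM⟩ := isCompact_Icc.exists_pos_bound_of_continuousOn
    (hsmooth.continuousOn_iteratedDerivWithin le_rfl (uniqueDiffOn_Icc zero_lt_one))
  refine ⟨2 ^ (n + 1) * M * (n + 1) ^ (n + 1), by positivity, fun p _ l _ _ ↦ ?_⟩
  have key : |Δ_[1] ^[n + 1] (gridSample w p) l|
      ≤ 2 ^ (n + 1) * (M * ((n + 1) * (p : ℝ)⁻¹) ^ (n + 1)) := by
    by_cases hl : 0 ≤ l ∧ l + (n + 1) ≤ (p : ℤ) - 1
    · exact abs_fwdDiff_iter_gridSample_le_of_interior hsmooth hM hl.1 hl.2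
    · exact abs_fwdDiff_iter_gridSample_le_of_boundary hsmooth
        (fun k hk ↦ hbound k (Nat.lt_succ_of_le hk)) hM (by omega)
  rw [alphaLP_eq_neg_one_pow_mul_fwdDiff_iter, abs_mul, abs_pow, abs_neg, abs_one, one_pow,
    one_mul]
  convert key using 1
  rw [mul_pow, inv_pow]
  ring
end

section
/- Let K ≥ 0 be an integer, w(x) = x^K (1-x)^K, and for p > 2K define γ_p = p^{-1}(6 ∑_{l=-K}^{p-1} α_{l,p}² - 8 ∑_{l=p-K}^{p-1} α_{l,p} α_{l-p,p}), where α_{l,p} = ∑_{i=max(0,-l)}^{min(K,p-1-l)} C(K,i) (-1)^i w((l+i)/p). Then there exist constants 0 < c_- < c_+ and p_0 such that c_- p^{-2K} ≤ γ_p ≤ c_+ p^{-2K} for all p ≥ p_0. -/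
/-- Normalized variance of the pre-averaged second-order noise differences. -/
noncomputable def gammaP (K : ℕ) (w : ℝ → ℝ) (p : ℕ) : ℝ :=
  (p : ℝ)⁻¹ *
    (6 * ∑ l ∈ Finset.Icc (-(K : ℤ)) ((p : ℤ) - 1), (alphaLP K w l p) ^ 2
      - 8 * ∑ l ∈ Finset.Icc ((p : ℤ) - K) ((p : ℤ) - 1),
          alphaLP K w l p * alphaLP K w (l - p) p)

/-!
Away from the boundary, `α_{l,p} = (-1)^K Δ^K_{1/p} w (l/p)`, which is `O(p^{-K})` by the mean
value theorem; near the boundary `α_{l,p} = O(p^{-K})` because `w` vanishes to order `K` at `0`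
and `1`. This gives the upper bound, the cross sum having only `K` terms.
For the lower bound, summation by parts and `Δ^K x^K = K!` give
`∑_l α_{l,p} l^K = K! ∑_m w(m/p) ≳ p`, and Cauchy–Schwarz against `∑_l l^{2K} ≲ p^{2K+1}` turns
this into `∑_l α_{l,p}^2 ≳ p^{1-2K}`, which dominates the cross sum for large `p`.
-/

open Finset
open scoped fwdDiff

section FwdDiff

variable {g : ℝ → ℝ} {h : ℝ}

theorem hasDerivAt_iterate_fwdDiff (hg : Differentiable ℝ g) (n : ℕ) (x : ℝ) :
    HasDerivAt (Δ_[h] ^[n] g) (Δ_[h] ^[n] (deriv g) x) x := by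
  rw [funext (fwdDiff_iter_eq_sum_shift h g n), fwdDiff_iter_eq_sum_shift]
  exact HasDerivAt.fun_sum fun k _ => ((hg _).hasDerivAt.comp_add_const _ _).fun_const_smul _

theorem abs_iterate_fwdDiff_le (hh : 0 < h) {n : ℕ} (hg : ContDiff ℝ n g) {x M : ℝ}
    (hM : ∀ t ∈ Set.Icc x (x + n * h), |iteratedDeriv n g t| ≤ M) :
    |Δ_[h] ^[n] g x| ≤ M * h ^ n := by
  induction n generalizing g x with
  | zero => simpa using hM x (by simp)
  | succ n ih =>
    obtain ⟨hdiff, -, hg'⟩ := (contDiff_succ_iff_deriv (n := n)).mp (by exact_mod_cast hg)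
    have hbound : ∀ t ∈ Set.Ico x (x + h), ‖Δ_[h] ^[n] (deriv g) t‖ ≤ M * h ^ n := fun t ht =>
      ih hg' fun s hs => by
        rw [← iteratedDeriv_succ']
        exact hM s ⟨by linarith [ht.1, hs.1], by push_cast; linarith [ht.2, hs.2]⟩
    have hmvt := norm_image_sub_le_of_norm_deriv_le_segment'
      (fun t _ => (hasDerivAt_iterate_fwdDiff hdiff n t).hasDerivWithinAt) hbound
      (x + h) ⟨by linarith, le_rfl⟩
    rw [Function.iterate_succ_apply']
    simpa [fwdDiff, pow_succ, mul_assoc] using hmvt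

theorem sum_choose_mul_neg_one_pow_mul_shift (f : ℝ → ℝ) (n : ℕ) (y : ℝ) :
    ∑ k ∈ range (n + 1), (n.choose k : ℝ) * (-1) ^ k * f (y + k * h)
      = (-1) ^ n * Δ_[h] ^[n] f y := by
  rw [fwdDiff_iter_eq_sum_shift, mul_sum]
  refine sum_congr rfl fun k hk => ?_
  have hsign : (-1 : ℝ) ^ n * (-1) ^ (n - k) = (-1) ^ k := by
    rw [← pow_add, show n + (n - k) = k + 2 * (n - k) by grind, pow_add, pow_mul]
    simp
  rw [zsmul_eq_mul, nsmul_eq_mul]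
  push_cast
  linear_combination (n.choose k * f (y + k * h)) * hsign.symm

theorem sum_choose_mul_neg_one_pow_mul_sub_pow (n : ℕ) (x : ℝ) :
    ∑ i ∈ range (n + 1), (n.choose i : ℝ) * (-1) ^ i * (x - i) ^ n = n.factorial := by
  set f : ℝ → ℝ := ((-1 : ℝ) ^ n) • fun r => r ^ n
  have hfactorial : Δ_[1] ^[n] f (-x) = (-1) ^ n * n.factorial := by
    rw [fwdDiff_iter_const_smul, fwdDiff_iter_eq_factorial]
    simp
  have hshift := sum_choose_mul_neg_one_pow_mul_shift (h := 1) f n (-x)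
  rw [hfactorial, ← mul_assoc, ← pow_add, ← two_mul, pow_mul] at hshift
  simp only [neg_one_sq, one_pow, one_mul] at hshift
  rw [← hshift]
  refine sum_congr rfl fun i _ => ?_
  simp only [f, Pi.smul_apply, smul_eq_mul, ← mul_pow]
  ring_nf

end FwdDiff

section Alpha

variable {K p : ℕ} {w : ℝ → ℝ} {l : ℤ}

theorem abs_alphaLP_le {B : ℝ} (hB : 0 ≤ B)
    (hw : ∀ i ≤ K, 0 ≤ l + i → l + i ≤ (p : ℤ) - 1 → |w ((l + i) / p)| ≤ B) :
    |alphaLP K w l p| ≤ 2 ^ K * B := by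
  have hterm : ∀ i ∈ range (K + 1),
      |if 0 ≤ l + (i : ℤ) ∧ l + (i : ℤ) ≤ (p : ℤ) - 1 then
        (K.choose i : ℝ) * (-1) ^ i * w ((l + i) / p) else 0| ≤ K.choose i * B := by
    intro i hi
    split_ifs with hc
    · rw [abs_mul, abs_mul, abs_pow, abs_neg, abs_one, one_pow, mul_one, Nat.abs_cast]
      exact mul_le_mul_of_nonneg_left (hw i (by grind) hc.1 hc.2) (Nat.cast_nonneg _)
    · rw [abs_zero]
      positivity
  calc |alphaLP K w l p| ≤ ∑ i ∈ range (K + 1), (K.choose i : ℝ) * B :=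
        (abs_sum_le_sum_abs _ _).trans (sum_le_sum hterm)
    _ = 2 ^ K * B := by rw [← sum_mul, ← Nat.cast_sum, Nat.sum_range_choose, Nat.cast_pow,
        Nat.cast_ofNat]

theorem alphaLP_eq_fwdDiff (h0 : 0 ≤ l) (h1 : l + K ≤ (p : ℤ) - 1) :
    alphaLP K w l p = (-1) ^ K * Δ_[(p : ℝ)⁻¹] ^[K] w (l / p) := by
  rw [← sum_choose_mul_neg_one_pow_mul_shift, alphaLP]
  refine sum_congr rfl fun i hi => ?_
  rw [if_pos ⟨by omega, by grind⟩, add_div, div_eq_mul_inv (i : ℝ)]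

theorem abs_alphaLP_le_of_iteratedDeriv (hw : ContDiff ℝ K w) {M : ℝ}
    (hM : ∀ t ∈ Set.Icc (0 : ℝ) 1, |iteratedDeriv K w t| ≤ M)
    (h0 : 0 ≤ l) (h1 : l + K ≤ (p : ℤ) - 1) :
    |alphaLP K w l p| ≤ M / p ^ K := by
  have hp : (0 : ℝ) < p := by exact_mod_cast (show 0 < (p : ℤ) by omega)
  have hsub : Set.Icc ((l : ℝ) / p) (l / p + K * (p : ℝ)⁻¹) ⊆ Set.Icc 0 1 := by
    have hl : (0 : ℝ) ≤ l := by exact_mod_cast h0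
    have hlK : (l : ℝ) + K ≤ p := by exact_mod_cast (show l + K ≤ p by omega)
    refine Set.Icc_subset_Icc (by positivity) ?_
    rwa [← div_eq_mul_inv, ← add_div, div_le_one hp]
  rw [alphaLP_eq_fwdDiff h0 h1, abs_mul, abs_pow, abs_neg, abs_one, one_pow, one_mul,
    div_eq_mul_inv M, ← inv_pow]
  exact abs_iterate_fwdDiff_le (inv_pos.mpr hp) hw fun t ht => hM t (hsub ht)

theorem sum_alphaLP_mul (f : ℤ → ℝ) :
    ∑ l ∈ Icc (-(K : ℤ)) (p - 1), alphaLP K w l p * f l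
      = ∑ m ∈ Icc (0 : ℤ) (p - 1),
          w (m / p) * ∑ i ∈ range (K + 1), (K.choose i : ℝ) * (-1) ^ i * f (m - i) := by
  simp only [alphaLP, sum_mul, mul_sum, ite_mul, zero_mul]
  rw [sum_comm, sum_comm (s := Icc 0 _)]
  refine sum_congr rfl fun i hi => ?_
  rw [← sum_filter]
  have hiK : i ≤ K := Nat.lt_succ_iff.mp (mem_range.mp hi)
  refine sum_nbij' (· + i) (· - i) ?_ ?_ ?_ ?_ ?_ <;> intro a ha <;>
    simp only [mem_filter, mem_Icc] at ha ⊢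
  · omega
  · omega
  · ring
  · ring
  · push_cast
    ring_nf

theorem sum_alphaLP_mul_pow :
    ∑ l ∈ Icc (-(K : ℤ)) (p - 1), alphaLP K w l p * (l : ℝ) ^ K
      = K.factorial * ∑ m ∈ Icc (0 : ℤ) (p - 1), w (m / p) := by
  rw [sum_alphaLP_mul, mul_sum]
  refine sum_congr rfl fun m _ => ?_
  push_cast
  rw [sum_choose_mul_neg_one_pow_mul_sub_pow, mul_comm]

noncomputable def alphaSqSum (K : ℕ) (w : ℝ → ℝ) (p : ℕ) : ℝ :=
  ∑ l ∈ Icc (-(K : ℤ)) (p - 1), alphaLP K w l p ^ 2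

noncomputable def alphaCrossSum (K : ℕ) (w : ℝ → ℝ) (p : ℕ) : ℝ :=
  ∑ l ∈ Icc ((p : ℤ) - K) (p - 1), alphaLP K w l p * alphaLP K w (l - p) p

theorem gammaP_eq : gammaP K w p = (p : ℝ)⁻¹ * (6 * alphaSqSum K w p - 8 * alphaCrossSum K w p) :=
  rfl

theorem alphaSqSum_nonneg : 0 ≤ alphaSqSum K w p :=
  sum_nonneg fun _ _ => sq_nonneg _

theorem card_Icc_neg_sub_one : #(Icc (-(K : ℤ)) (p - 1)) = p + K := by
  rw [Int.card_Icc]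
  omega

theorem sq_factorial_mul_sum_le_alphaSqSum_mul (hKp : K ≤ p) :
    (K.factorial * ∑ m ∈ Icc (0 : ℤ) (p - 1), w (m / p)) ^ 2
      ≤ alphaSqSum K w p * ((p + K) * (p : ℝ) ^ (2 * K)) := by
  have hpow : ∀ l ∈ Icc (-(K : ℤ)) (p - 1), ((l : ℝ) ^ K) ^ 2 ≤ (p : ℝ) ^ (2 * K) := by
    intro l hl
    have hl : |(l : ℝ)| ≤ p := by
      rw [mem_Icc] at hl
      exact abs_le.mpr ⟨by exact_mod_cast (show -(p : ℤ) ≤ l by omega),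
        by exact_mod_cast (show l ≤ p by omega)⟩
    rw [← pow_mul, mul_comm, pow_mul, pow_mul, ← sq_abs]
    gcongr
  calc (K.factorial * ∑ m ∈ Icc (0 : ℤ) (p - 1), w (m / p)) ^ 2
      = (∑ l ∈ Icc (-(K : ℤ)) (p - 1), alphaLP K w l p * (l : ℝ) ^ K) ^ 2 := by
        rw [sum_alphaLP_mul_pow]
    _ ≤ alphaSqSum K w p * ∑ l ∈ Icc (-(K : ℤ)) (p - 1), ((l : ℝ) ^ K) ^ 2 :=
        sum_mul_sq_le_sq_mul_sq _ _ _
    _ ≤ alphaSqSum K w p * ((p + K) * (p : ℝ) ^ (2 * K)) := by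
        gcongr
        · exact alphaSqSum_nonneg
        · refine (sum_le_card_nsmul _ _ _ hpow).trans_eq ?_
          rw [card_Icc_neg_sub_one, nsmul_eq_mul]
          push_cast
          ring

end Alpha

section Bump

def bump (K : ℕ) (x : ℝ) : ℝ := x ^ K * (1 - x) ^ K

variable {K : ℕ}

theorem contDiff_bump {n : WithTop ℕ∞} : ContDiff ℝ n (bump K) :=
  (contDiff_id.pow K).mul ((contDiff_const.sub contDiff_id).pow K)

theorem bump_nonneg {x : ℝ} (hx0 : 0 ≤ x) (hx1 : x ≤ 1) : 0 ≤ bump K x :=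
  mul_nonneg (pow_nonneg hx0 K) (pow_nonneg (by linarith) K)

theorem abs_bump_le {x c : ℝ} (hx0 : 0 ≤ x) (hx1 : x ≤ 1) (hc : min x (1 - x) ≤ c) :
    |bump K x| ≤ c ^ K := by
  have hprod : 0 ≤ x * (1 - x) := mul_nonneg hx0 (by linarith)
  have hmin : x * (1 - x) ≤ min x (1 - x) :=
    le_min (mul_le_of_le_one_right hx0 (by linarith)) (mul_le_of_le_one_left (by linarith) hx1)
  rw [bump, ← mul_pow, abs_of_nonneg (pow_nonneg hprod K)]
  exact pow_le_pow_left₀ hprod (hmin.trans hc) K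

theorem pow_le_bump {x : ℝ} (h1 : 1 / 4 ≤ x) (h3 : x ≤ 3 / 4) : (3 / 16 : ℝ) ^ K ≤ bump K x := by
  rw [bump, ← mul_pow]
  exact pow_le_pow_left₀ (by norm_num) (by nlinarith) K

theorem abs_bump_intCast_div_le {p : ℕ} {m : ℤ} {c : ℝ} (h0 : 0 ≤ m) (h1 : m < p)
    (hc : min (m : ℝ) (p - m) ≤ c) : |bump K (m / p)| ≤ (c / p) ^ K := by
  have hp : (0 : ℝ) < p := by exact_mod_cast h0.trans_lt h1
  have hm0 : (0 : ℝ) ≤ m := by exact_mod_cast h0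
  have hm1 : (m : ℝ) ≤ p := by exact_mod_cast h1.le
  refine abs_bump_le (div_nonneg hm0 hp.le) ((div_le_one hp).mpr hm1) ?_
  rw [one_sub_div hp.ne', min_div_div_right hp.le]
  gcongr

theorem abs_alphaLP_bump_le_of_neg {p : ℕ} {l : ℤ} (hl : l < 0) :
    |alphaLP K (bump K) l p| ≤ (2 * K / p) ^ K := by
  rw [mul_div_assoc, mul_pow]
  refine abs_alphaLP_le (by positivity) fun i hi h0 h1 => ?_
  have := abs_bump_intCast_div_le (K := K) (p := p) (c := K) h0 (by omega)
    (min_le_of_left_le (by exact_mod_cast (show l + i ≤ K by omega)))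
  exact_mod_cast this

theorem abs_alphaLP_bump_le_of_le {p : ℕ} {l : ℤ} (hl : (p : ℤ) - K ≤ l) :
    |alphaLP K (bump K) l p| ≤ (2 * K / p) ^ K := by
  rw [mul_div_assoc, mul_pow]
  refine abs_alphaLP_le (by positivity) fun i hi h0 h1 => ?_
  have := abs_bump_intCast_div_le (K := K) (p := p) (c := K) h0 (by omega)
    (min_le_of_right_le (by exact_mod_cast (show p - (l + i) ≤ K by omega)))
  exact_mod_cast this

theorem exists_abs_alphaLP_bump_le (K : ℕ) :
    ∃ C, ∀ (p : ℕ) (l : ℤ), |alphaLP K (bump K) l p| ≤ C / p ^ K := by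
  obtain ⟨M, hM⟩ := (isCompact_Icc (a := (0 : ℝ)) (b := 1)).exists_bound_of_continuousOn
    ((contDiff_bump (K := K) (n := K)).continuous_iteratedDeriv K le_rfl).continuousOn
  refine ⟨max M ((2 * K) ^ K), fun p l => ?_⟩
  have hboundary : (2 * K / p : ℝ) ^ K ≤ max M ((2 * K) ^ K) / p ^ K := by
    rw [div_pow]
    gcongr
    exact le_max_right _ _
  rcases lt_or_ge l 0 with hl | hl
  · exact (abs_alphaLP_bump_le_of_neg hl).trans hboundary
  rcases le_or_gt ((p : ℤ) - K) l with hl' | hl'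
  · exact (abs_alphaLP_bump_le_of_le hl').trans hboundary
  refine (abs_alphaLP_le_of_iteratedDeriv (M := M) contDiff_bump (fun t ht => ?_) hl
    (by omega)).trans ?_
  · simpa using hM t ht
  · gcongr
    exact le_max_left _ _

theorem exists_alphaSqSum_bump_le (K : ℕ) :
    ∃ C, ∀ p : ℕ, K ≤ p → alphaSqSum K (bump K) p ≤ C * p / p ^ (2 * K) := by
  obtain ⟨C, hC⟩ := exists_abs_alphaLP_bump_le K
  refine ⟨2 * C ^ 2, fun p hKp => ?_⟩
  have hterm : ∀ l ∈ Icc (-(K : ℤ)) (p - 1), alphaLP K (bump K) l p ^ 2 ≤ C ^ 2 / p ^ (2 * K) := by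
    intro l _
    rw [pow_mul', ← div_pow, ← sq_abs]
    exact pow_le_pow_left₀ (abs_nonneg _) (hC p l) 2
  calc alphaSqSum K (bump K) p ≤ (p + K) * (C ^ 2 / p ^ (2 * K)) := by
        refine (sum_le_card_nsmul _ _ _ hterm).trans_eq ?_
        rw [card_Icc_neg_sub_one, nsmul_eq_mul]
        push_cast
        ring
    _ ≤ 2 * C ^ 2 * p / p ^ (2 * K) := by
        have hKp' : (K : ℝ) ≤ p := by exact_mod_cast hKp
        rw [mul_div_assoc']
        exact div_le_div_of_nonneg_right (by nlinarith [sq_nonneg C]) (by positivity)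

theorem abs_alphaCrossSum_bump_le (p : ℕ) :
    |alphaCrossSum K (bump K) p| ≤ K * (2 * K) ^ (2 * K) / p ^ (2 * K) := by
  have hterm : ∀ l ∈ Icc ((p : ℤ) - K) (p - 1),
      |alphaLP K (bump K) l p * alphaLP K (bump K) (l - p) p| ≤ (2 * K / p) ^ (2 * K) := by
    intro l hl
    rw [mem_Icc] at hl
    rw [abs_mul, two_mul K, pow_add]
    exact mul_le_mul (abs_alphaLP_bump_le_of_le hl.1) (abs_alphaLP_bump_le_of_neg (by omega))
      (abs_nonneg _) (by positivity)
  calc |alphaCrossSum K (bump K) p| ≤ K * (2 * K / p) ^ (2 * K) := by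
        refine (abs_sum_le_sum_abs _ _).trans ((sum_le_card_nsmul _ _ _ hterm).trans_eq ?_)
        rw [Int.card_Icc, nsmul_eq_mul, show (p : ℤ) - 1 + 1 - (p - K) = K by ring]
        simp
    _ = K * (2 * K) ^ (2 * K) / p ^ (2 * K) := by rw [div_pow, mul_div_assoc]

theorem sum_bump_ge {p : ℕ} (hp : 6 ≤ p) :
    p / 4 * (3 / 16 : ℝ) ^ K ≤ ∑ m ∈ Icc (0 : ℤ) (p - 1), bump K (m / p) := by
  have hp0 : (0 : ℝ) < p := by positivity
  -- `n = ⌈p / 4⌉`, so that `[n, 2n]` lies in `[p / 4, 3p / 4]` once `p ≥ 6`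
  set n : ℤ := (p + 3) / 4
  have hmid : ∀ m ∈ Icc n (2 * n), (3 / 16 : ℝ) ^ K ≤ bump K (m / p) := by
    intro m hm
    rw [mem_Icc] at hm
    apply pow_le_bump
    · rw [le_div_iff₀ hp0]
      have : (p : ℝ) ≤ 4 * m := by exact_mod_cast (show (p : ℤ) ≤ 4 * m by omega)
      linarith
    · rw [div_le_iff₀ hp0]
      have : 4 * (m : ℝ) ≤ 3 * p := by exact_mod_cast (show 4 * m ≤ 3 * p by omega)
      linarith
  have hcard : (p : ℝ) / 4 ≤ #(Icc n (2 * n)) := by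
    rw [Int.card_Icc, div_le_iff₀ (by norm_num)]
    exact_mod_cast (show p ≤ (2 * n + 1 - n).toNat * 4 by omega)
  calc p / 4 * (3 / 16 : ℝ) ^ K ≤ #(Icc n (2 * n)) * (3 / 16 : ℝ) ^ K := by gcongr
    _ ≤ ∑ m ∈ Icc n (2 * n), bump K (m / p) := by
        simpa using card_nsmul_le_sum _ _ _ hmid
    _ ≤ ∑ m ∈ Icc (0 : ℤ) (p - 1), bump K (m / p) := by
        refine sum_le_sum_of_subset_of_nonneg (fun m => by simp only [mem_Icc]; omega) ?_
        intro m hm _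
        rw [mem_Icc] at hm
        have hm0 : (0 : ℝ) ≤ m := by exact_mod_cast hm.1
        have hm1 : (m : ℝ) ≤ p := by exact_mod_cast (show m ≤ p by omega)
        exact bump_nonneg (div_nonneg hm0 hp0.le) ((div_le_one hp0).mpr hm1)

theorem alphaSqSum_bump_ge {p : ℕ} (hp : 6 ≤ p) (hKp : K ≤ p) :
    (K.factorial * (3 / 16 : ℝ) ^ K) ^ 2 / 32 * p / p ^ (2 * K) ≤ alphaSqSum K (bump K) p := by
  have hp0 : (0 : ℝ) < p := by positivity
  have hKp' : (K : ℝ) ≤ p := by exact_mod_cast hKp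
  have hA := alphaSqSum_nonneg (K := K) (w := bump K) (p := p)
  have hsum : (K.factorial * (p / 4 * (3 / 16 : ℝ) ^ K)) ^ 2
      ≤ (K.factorial * ∑ m ∈ Icc (0 : ℤ) (p - 1), bump K (m / p)) ^ 2 := by
    gcongr
    exact sum_bump_ge hp
  have hCS := sq_factorial_mul_sum_le_alphaSqSum_mul (w := bump K) hKp
  have hcard : alphaSqSum K (bump K) p * ((p + K) * (p : ℝ) ^ (2 * K))
      ≤ alphaSqSum K (bump K) p * (2 * p * (p : ℝ) ^ (2 * K)) := by
    gcongr
    linarith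
  rw [div_le_iff₀ (by positivity)]
  refine le_of_mul_le_mul_left ?_ hp0
  nlinarith

theorem exists_gammaP_bump_le (K : ℕ) :
    ∃ C, ∀ p : ℕ, K < p → gammaP K (bump K) p ≤ C / p ^ (2 * K) := by
  obtain ⟨C, hC⟩ := exists_alphaSqSum_bump_le K
  refine ⟨6 * C + 8 * (K * (2 * K) ^ (2 * K)), fun p hKp => ?_⟩
  have hp1 : (1 : ℝ) ≤ p := by exact_mod_cast (show 1 ≤ p by omega)
  have hA := hC p hKp.le
  have hB := (abs_le.mp (abs_alphaCrossSum_bump_le (K := K) p)).1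
  set D : ℝ := K * (2 * K) ^ (2 * K)
  have hD : 8 * D / p ^ (2 * K) ≤ p * (8 * D / p ^ (2 * K)) :=
    le_mul_of_one_le_left (by positivity) hp1
  rw [gammaP_eq, inv_mul_le_iff₀ (by positivity)]
  calc 6 * alphaSqSum K (bump K) p - 8 * alphaCrossSum K (bump K) p
      ≤ 6 * (C * p / p ^ (2 * K)) + 8 * (D / p ^ (2 * K)) := by linarith
    _ = p * (6 * C / p ^ (2 * K)) + 8 * D / p ^ (2 * K) := by ring
    _ ≤ p * ((6 * C + 8 * D) / p ^ (2 * K)) := by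
        rw [add_div, mul_add]
        linarith

theorem exists_gammaP_bump_ge (K : ℕ) :
    ∃ c > 0, ∃ p₁ : ℕ, ∀ p : ℕ, p₁ ≤ p → c / p ^ (2 * K) ≤ gammaP K (bump K) p := by
  set c : ℝ := (K.factorial * (3 / 16 : ℝ) ^ K) ^ 2 / 32
  set D : ℝ := K * (2 * K) ^ (2 * K)
  refine ⟨3 * c, by positivity, max (max 6 K) ⌈8 * D / (3 * c)⌉₊, fun p hp => ?_⟩
  have hp0 : (0 : ℝ) < p := by exact_mod_cast (show 0 < p by omega)
  have hpD : 8 * D ≤ 3 * c * p := by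
    rw [← div_le_iff₀' (by positivity)]
    exact (Nat.le_ceil _).trans (by exact_mod_cast le_of_max_le_right hp)
  have hA := alphaSqSum_bump_ge (K := K) (p := p) (by omega) (by omega)
  have hB := (abs_le.mp (abs_alphaCrossSum_bump_le (K := K) p)).2
  rw [gammaP_eq, le_inv_mul_iff₀ hp0]
  calc p * (3 * c / p ^ (2 * K)) = 6 * (c * p / p ^ (2 * K)) - 3 * c * p / p ^ (2 * K) := by ring
    _ ≤ 6 * (c * p / p ^ (2 * K)) - 8 * (D / p ^ (2 * K)) := by
        rw [mul_div_assoc' 8]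
        gcongr
    _ ≤ 6 * alphaSqSum K (bump K) p - 8 * alphaCrossSum K (bump K) p := by linarith

end Bump

theorem gammaP_two_sided_bound (K : ℕ) :
    ∃ cm cp : ℝ, ∃ p0 : ℕ, 0 < cm ∧ cm < cp ∧ 2 * K < p0 ∧
      ∀ p : ℕ, p0 ≤ p →
        cm * ((p : ℝ) ^ (2 * K))⁻¹ ≤ gammaP K (fun x => x ^ K * (1 - x) ^ K) p ∧
        gammaP K (fun x => x ^ K * (1 - x) ^ K) p ≤ cp * ((p : ℝ) ^ (2 * K))⁻¹ := by
  obtain ⟨cm, hcm, p₁, hlow⟩ := exists_gammaP_bump_ge K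
  obtain ⟨C, hup⟩ := exists_gammaP_bump_le K
  refine ⟨cm, max C cm + 1, p₁ + 2 * K + 1, hcm, by linarith [le_max_right C cm], by omega,
    fun p hp => ?_⟩
  simp only [← div_eq_mul_inv]
  refine ⟨hlow p (by omega), (hup p (by omega)).trans ?_⟩
  gcongr
  linarith [le_max_left C cm]
end
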